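/- arXiv:1601.08196 — 5 statements merged into one kernel-verified Lean document; each statement's English description precedes it below -/
import Mathlib

section
/- Let r,s be nonzero complex numbers with r + s ≠ 0, and let V = C^{M|N} with homogeneous basis v_1,...,v_{M+N} where |v_i| = 0 for i ≤ M and |v_i| = 1 for i > M. Define S²V as the span of the vectors v_i⊗v_i for i ≤ M together with v_j⊗v_k + (-1)^{|j||k|} s v_k⊗v_j for j < k, and ∧²V as the span of v_i⊗v_i for i > M together with v_j⊗v_k − (-1)^{|j||k|} r v_k⊗v_j for j < k. Then V⊗V is the internal direct sum of S²V and ∧²V. -/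
/-! For `j < k` the generators of `S²V` and `∧²V` living on the plane spanned by `v_j⊗v_k` and
`v_k⊗v_j` are `v_j⊗v_k + c v_k⊗v_j` and `v_j⊗v_k + c' v_k⊗v_j` with `c = εs`, `c' = -εr`,
`ε = (-1)^{|j||k|}`; they form a basis of that plane exactly when `c ≠ c'`, i.e. `r + s ≠ 0`.
Each diagonal vector `v_i⊗v_i` lies in exactly one of the two spans. Disjointness comes from the
linear relations `f(k,j) = c f(j,k)` satisfied by every element of such a span, spanning from
inverting each `2 × 2` block. -/

open Matrix

noncomputable section

/-- parity of an index: 0 if `i < M` (even), 1 otherwise (odd). -/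
def par (M : ℕ) {n : ℕ} (i : Fin n) : ℕ := if (i : ℕ) < M then 0 else 1

/-- basis vector `v_i ⊗ v_j` of `V ⊗ V`, modeled as `Fin n × Fin n → ℂ`. -/
def bas2 {n : ℕ} (i j : Fin n) : Fin n × Fin n → ℂ := fun p => if p = (i, j) then 1 else 0

/-- `S²V`: span of `v_i⊗v_i` for `i ≤ M` together with
`v_j⊗v_k + (-1)^{|j||k|} s v_k⊗v_j` for `j < k`. -/
def S2 (n M : ℕ) (s : ℂ) : Submodule ℂ (Fin n × Fin n → ℂ) :=
  Submodule.span ℂ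
    ({v | ∃ i : Fin n, (i : ℕ) < M ∧ v = bas2 i i} ∪
     {v | ∃ j k : Fin n, j < k ∧
        v = bas2 j k + ((-1 : ℂ) ^ (par M j * par M k) * s) • bas2 k j})

/-- `∧²V`: span of `v_i⊗v_i` for `i > M` together with
`v_j⊗v_k − (-1)^{|j||k|} r v_k⊗v_j` for `j < k`. -/
def W2 (n M : ℕ) (r : ℂ) : Submodule ℂ (Fin n × Fin n → ℂ) :=
  Submodule.span ℂ
    ({v | ∃ i : Fin n, M ≤ (i : ℕ) ∧ v = bas2 i i} ∪
     {v | ∃ j k : Fin n, j < k ∧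
        v = bas2 j k - ((-1 : ℂ) ^ (par M j * par M k) * r) • bas2 k j})

section TwistedSpan

variable {K ι : Type*} [Field K] [LinearOrder ι]

def twistedSpan (D : ι → Prop) (c : ι → ι → K) : Submodule K (ι × ι → K) :=
  Submodule.span K
    ({v | ∃ i, D i ∧ v = Pi.single (i, i) 1} ∪
     {v | ∃ j k, j < k ∧ v = Pi.single (j, k) 1 + c j k • Pi.single (k, j) 1})

theorem apply_of_mem_twistedSpan {D : ι → Prop} {c : ι → ι → K} {f : ι × ι → K}
    (hf : f ∈ twistedSpan D c) :
    (∀ i, ¬ D i → f (i, i) = 0) ∧ ∀ j k, j < k → f (k, j) = c j k * f (j, k) := by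
  induction hf using Submodule.span_induction with
  | mem v hv =>
    rcases hv with ⟨i, hi, rfl⟩ | ⟨j, k, hjk, rfl⟩ <;>
      refine ⟨fun i' hi' => ?_, fun j' k' hjk' => ?_⟩ <;>
      simp only [Pi.add_apply, Pi.smul_apply, smul_eq_mul, Pi.single_apply, Prod.mk.injEq] <;>
      grind
  | zero => simp
  | add f g _ _ hf hg =>
    refine ⟨fun i hi => by simp [hf.1 i hi, hg.1 i hi], fun j k hjk => ?_⟩
    simp only [Pi.add_apply, hf.2 j k hjk, hg.2 j k hjk]; ring
  | smul a f _ hf =>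
    refine ⟨fun i hi => by simp [hf.1 i hi], fun j k hjk => ?_⟩
    simp only [Pi.smul_apply, smul_eq_mul, hf.2 j k hjk]; ring

variable {D D' : ι → Prop} {c c' : ι → ι → K}

theorem disjoint_twistedSpan (hD : ∀ i, ¬ (D i ∧ D' i)) (hc : ∀ j k, j < k → c j k ≠ c' j k) :
    Disjoint (twistedSpan D c) (twistedSpan D' c') := by
  rw [Submodule.disjoint_def]
  intro f hf hf'
  obtain ⟨hdiag, hoff⟩ := apply_of_mem_twistedSpan hf
  obtain ⟨hdiag', hoff'⟩ := apply_of_mem_twistedSpan hf'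
  have upper : ∀ j k, j < k → f (j, k) = 0 := fun j k hjk => by
    have : (c j k - c' j k) * f (j, k) = 0 := by
      rw [sub_mul, ← hoff j k hjk, ← hoff' j k hjk, sub_self]
    exact (mul_eq_zero.mp this).resolve_left (sub_ne_zero.mpr (hc j k hjk))
  funext ⟨a, b⟩
  rcases lt_trichotomy a b with hab | rfl | hab
  · exact upper a b hab
  · by_cases ha : D a
    · exact hdiag' a fun ha' => hD a ⟨ha, ha'⟩
    · exact hdiag a ha
  · rw [hoff b a hab, upper b a hab, mul_zero]; rfl

theorem codisjoint_twistedSpan [Finite ι] (hD : ∀ i, D i ∨ D' i)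
    (hc : ∀ j k, j < k → c j k ≠ c' j k) :
    Codisjoint (twistedSpan D c) (twistedSpan D' c') := by
  rw [codisjoint_iff_le_sup, ← (Pi.basisFun K (ι × ι)).span_eq, Submodule.span_le]
  rintro _ ⟨⟨a, b⟩, rfl⟩
  rw [Pi.basisFun_apply]
  set S := twistedSpan D c ⊔ twistedSpan D' c'
  have pair_mem : ∀ j k, j < k → Pi.single (j, k) 1 ∈ S ∧ Pi.single (k, j) 1 ∈ S := by
    intro j k hjk
    set u : ι × ι → K := Pi.single (j, k) 1 + c j k • Pi.single (k, j) 1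
    set w : ι × ι → K := Pi.single (j, k) 1 + c' j k • Pi.single (k, j) 1
    have hu : u ∈ S := Submodule.mem_sup_left (Submodule.subset_span (Or.inr ⟨j, k, hjk, rfl⟩))
    have hw : w ∈ S := Submodule.mem_sup_right (Submodule.subset_span (Or.inr ⟨j, k, hjk, rfl⟩))
    have lower : Pi.single (k, j) 1 = (c j k - c' j k)⁻¹ • (u - w) := by
      rw [eq_inv_smul_iff₀ (sub_ne_zero.mpr (hc j k hjk))]
      simp only [u, w]; module
    have lower_mem : Pi.single (k, j) 1 ∈ S := lower ▸ S.smul_mem _ (S.sub_mem hu hw)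
    refine ⟨?_, lower_mem⟩
    rw [show Pi.single (j, k) 1 = u - c j k • Pi.single (k, j) 1 by simp only [u]; module]
    exact S.sub_mem hu (S.smul_mem _ lower_mem)
  rcases lt_trichotomy a b with hab | rfl | hab
  · exact (pair_mem a b hab).1
  · rcases hD a with ha | ha
    · exact Submodule.mem_sup_left (Submodule.subset_span (Or.inl ⟨a, ha, rfl⟩))
    · exact Submodule.mem_sup_right (Submodule.subset_span (Or.inl ⟨a, ha, rfl⟩))
  · exact (pair_mem b a hab).2

theorem isCompl_twistedSpan [Finite ι] (hD : ∀ i, D' i ↔ ¬ D i)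
    (hc : ∀ j k, j < k → c j k ≠ c' j k) :
    IsCompl (twistedSpan D c) (twistedSpan D' c') :=
  ⟨disjoint_twistedSpan (fun i h => (hD i).mp h.2 h.1) hc,
    codisjoint_twistedSpan (fun i => (em (D i)).imp_right (hD i).mpr) hc⟩

end TwistedSpan

theorem bas2_eq_single {n : ℕ} (i j : Fin n) : bas2 i j = Pi.single (i, j) 1 := by
  funext p
  simp [bas2, Pi.single_apply]

theorem S2_eq_twistedSpan (n M : ℕ) (s : ℂ) :
    S2 n M s = twistedSpan (fun i : Fin n => (i : ℕ) < M)
      (fun j k => (-1) ^ (par M j * par M k) * s) := by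
  simp only [S2, twistedSpan, bas2_eq_single]

theorem W2_eq_twistedSpan (n M : ℕ) (r : ℂ) :
    W2 n M r = twistedSpan (fun i : Fin n => M ≤ (i : ℕ))
      (fun j k => -((-1) ^ (par M j * par M k) * r)) := by
  simp only [W2, twistedSpan, bas2_eq_single, neg_smul, sub_eq_add_neg]

theorem stmt0_general (M N : ℕ) (r s : ℂ) (hrs : r + s ≠ 0) :
    IsCompl (S2 (M + N) M s) (W2 (M + N) M r) := by
  rw [S2_eq_twistedSpan, W2_eq_twistedSpan]
  refine isCompl_twistedSpan (fun i => not_lt.symm) fun j k _ => ?_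
  rw [ne_eq, ← sub_eq_zero, sub_neg_eq_add, ← mul_add]
  exact mul_ne_zero (pow_ne_zero _ (neg_ne_zero.mpr one_ne_zero)) (add_comm r s ▸ hrs)

/-- for `r,s ≠ 0` with `r + s ≠ 0`, `V⊗V` is the internal direct sum
of `S²V` and `∧²V`. -/
theorem stmt0 (M N : ℕ) (r s : ℂ) (hr : r ≠ 0) (hs : s ≠ 0) (hrs : r + s ≠ 0) :
    IsCompl (S2 (M + N) M s) (W2 (M + N) M r) :=
  stmt0_general M N r s hrs

end
end

section
/- Let r,s be nonzero complex numbers with r+s ≠ 0, V = C^{M|N}, P and Q the projections onto S²V and ∧²V, and R̂ = rP − sQ. Then R̂ satisfies the braid relation R̂₁₂R̂₂₃R̂₁₂ = R̂₂₃R̂₁₂R̂₂₃ in End(V^{⊗3}). -/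
/-!
`R̂` acts by `r` on `S²V` and by `−s` on `∧²V`. For `j < k` the spanning vectors
`v_j ⊗ v_k + ε s v_k ⊗ v_j` and `v_j ⊗ v_k − ε r v_k ⊗ v_j` (with `ε = (−1)^{|j||k|}`) can be
solved for `v_j ⊗ v_k` and `v_k ⊗ v_j` because `r + s ≠ 0`, which gives `R̂` explicitly:
`v_j ⊗ v_k ↦ (r − s) v_j ⊗ v_k + ε r s v_k ⊗ v_j` and `v_k ⊗ v_j ↦ ε v_j ⊗ v_k`.
Both sides of the braid relation then agree on each `v_i ⊗ v_j ⊗ v_k`, as one checks case by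
case on the relative order and the parities of `i, j, k`.
-/
open Matrix

noncomputable section

/-- `t₁₂ = t ⊗ 1` on `V^{⊗3}`. -/
def L12 {n : ℕ} (t : Matrix (Fin n × Fin n) (Fin n × Fin n) ℂ) :
    Matrix (Fin n × Fin n × Fin n) (Fin n × Fin n × Fin n) ℂ :=
  fun p q => t (p.1, p.2.1) (q.1, q.2.1) * (if p.2.2 = q.2.2 then 1 else 0)

/-- `t₂₃ = 1 ⊗ t` on `V^{⊗3}`. -/
def L23 {n : ℕ} (t : Matrix (Fin n × Fin n) (Fin n × Fin n) ℂ) :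
    Matrix (Fin n × Fin n × Fin n) (Fin n × Fin n × Fin n) ℂ :=
  fun p q => (if p.1 = q.1 then 1 else 0) * t (p.2.1, p.2.2) (q.2.1, q.2.2)

/-- `v_i ⊗ v_j ⊗ v_k`. -/
def bas3 {n : ℕ} (i j k : Fin n) : Fin n × Fin n × Fin n → ℂ := Pi.single (i, j, k) 1

def superSign (M : ℕ) {n : ℕ} (j k : Fin n) : ℂ := (-1) ^ (par M j * par M k)

section Parity

variable {M n : ℕ} {i j k : Fin n}

lemma par_of_lt (h : (i : ℕ) < M) : par M i = 0 := if_pos h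

lemma par_of_le (h : M ≤ (i : ℕ)) : par M i = 1 := if_neg (not_lt.mpr h)

lemma superSign_mul_self : superSign M j k * superSign M j k = 1 := by
  rw [superSign, ← mul_pow]; norm_num

lemma superSign_ne_zero : superSign M j k ≠ 0 := pow_ne_zero _ (by norm_num)

end Parity

section Lift

variable {n : ℕ}

/-- `v ↦ v ⊗ v_c`. -/
def tensorRight (c : Fin n) : (Fin n × Fin n → ℂ) →ₗ[ℂ] (Fin n × Fin n × Fin n → ℂ) :=
  LinearMap.pi fun p => if p.2.2 = c then LinearMap.proj (p.1, p.2.1) else 0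

/-- `v ↦ v_c ⊗ v`. -/
def tensorLeft (c : Fin n) : (Fin n × Fin n → ℂ) →ₗ[ℂ] (Fin n × Fin n × Fin n → ℂ) :=
  LinearMap.pi fun p => if p.1 = c then LinearMap.proj p.2 else 0

lemma tensorRight_bas2 (i j c : Fin n) : tensorRight c (bas2 i j) = bas3 i j c := by
  ext ⟨x, y, z⟩
  by_cases hz : z = c <;> simp [tensorRight, bas2, bas3, Pi.single_apply, hz]

lemma tensorLeft_bas2 (c i j : Fin n) : tensorLeft c (bas2 i j) = bas3 c i j := by
  ext ⟨x, y, z⟩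
  by_cases hx : x = c <;> simp [tensorLeft, bas2, bas3, Pi.single_apply, hx]

lemma L12_mulVec_tensorRight (t : Matrix (Fin n × Fin n) (Fin n × Fin n) ℂ) (c : Fin n)
    (v : Fin n × Fin n → ℂ) : L12 t *ᵥ tensorRight c v = tensorRight c (t *ᵥ v) := by
  ext ⟨x, y, z⟩
  by_cases hz : z = c <;>
    simp [tensorRight, L12, mulVec, dotProduct, Fintype.sum_prod_type, hz]

lemma L23_mulVec_tensorLeft (t : Matrix (Fin n × Fin n) (Fin n × Fin n) ℂ) (c : Fin n)
    (v : Fin n × Fin n → ℂ) : L23 t *ᵥ tensorLeft c v = tensorLeft c (t *ᵥ v) := by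
  ext ⟨x, y, z⟩
  by_cases hx : x = c <;>
    simp [tensorLeft, L23, mulVec, dotProduct, Fintype.sum_prod_type, hx]

lemma L12_mulVec_bas3 (t : Matrix (Fin n × Fin n) (Fin n × Fin n) ℂ) (i j c : Fin n) :
    L12 t *ᵥ bas3 i j c = tensorRight c (t *ᵥ bas2 i j) := by
  rw [← tensorRight_bas2, L12_mulVec_tensorRight]

lemma L23_mulVec_bas3 (t : Matrix (Fin n × Fin n) (Fin n × Fin n) ℂ) (c i j : Fin n) :
    L23 t *ᵥ bas3 c i j = tensorLeft c (t *ᵥ bas2 i j) := by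
  rw [← tensorLeft_bas2, L23_mulVec_tensorLeft]

end Lift

/-- The action of `R̂ = rP − sQ` on the basis `v_j ⊗ v_k` of `V ⊗ V`, read off from its
eigenvalues `r` on `S²V` and `−s` on `∧²V`. -/
structure IsSuperRCheck (M : ℕ) (r s : ℂ) {n : ℕ}
    (R : Matrix (Fin n × Fin n) (Fin n × Fin n) ℂ) : Prop where
  mulVec_bas2_self_of_lt : ∀ i : Fin n, (i : ℕ) < M → R *ᵥ bas2 i i = r • bas2 i i
  mulVec_bas2_self_of_le : ∀ i : Fin n, M ≤ (i : ℕ) → R *ᵥ bas2 i i = (-s) • bas2 i i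
  mulVec_bas2_of_lt : ∀ j k : Fin n, j < k →
    R *ᵥ bas2 j k = (r - s) • bas2 j k + (r * s * superSign M j k) • bas2 k j
  mulVec_bas2_of_gt : ∀ j k : Fin n, j < k → R *ᵥ bas2 k j = superSign M j k • bas2 j k

theorem IsSuperRCheck.braid {M n : ℕ} {r s : ℂ} {R : Matrix (Fin n × Fin n) (Fin n × Fin n) ℂ}
    (hR : IsSuperRCheck M r s R) : L12 R * L23 R * L12 R = L23 R * L12 R * L23 R := by
  obtain ⟨hEven, hOdd, hLt, hGt⟩ := hR
  refine ext_of_mulVec_single fun ⟨i, j, k⟩ => ?_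
  simp only [← mulVec_mulVec]
  change _ *ᵥ (_ *ᵥ (_ *ᵥ bas3 i j k)) = _ *ᵥ (_ *ᵥ (_ *ᵥ bas3 i j k))
  rcases lt_or_ge (i : ℕ) M with hi | hi <;> rcases lt_or_ge (j : ℕ) M with hj | hj <;>
    rcases lt_or_ge (k : ℕ) M with hk | hk <;>
    rcases lt_trichotomy i j with hij | hij | hij <;> rcases lt_trichotomy j k with hjk | hjk | hjk <;>
    rcases lt_trichotomy i k with hik | hik | hik <;>
    first
    | (exfalso; omega)
    | (simp only [L12_mulVec_bas3, L23_mulVec_bas3, map_add, map_smul, tensorRight_bas2,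
          tensorLeft_bas2, mulVec_add, mulVec_smul, smul_add, smul_smul, *] <;>
       (try simp only [superSign, par_of_lt, par_of_le, *]) <;>
       module)

section Eigenvectors

variable {n M : ℕ} {r s : ℂ}

lemma add_smul_bas2_mem_S2 {j k : Fin n} (h : j < k) :
    bas2 j k + (superSign M j k * s) • bas2 k j ∈ S2 n M s :=
  Submodule.subset_span (Or.inr ⟨j, k, h, rfl⟩)

lemma sub_smul_bas2_mem_W2 {j k : Fin n} (h : j < k) :
    bas2 j k - (superSign M j k * r) • bas2 k j ∈ W2 n M r :=
  Submodule.subset_span (Or.inr ⟨j, k, h, rfl⟩)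

theorem isSuperRCheck_of_eigen (hrs : r + s ≠ 0) {R : Matrix (Fin n × Fin n) (Fin n × Fin n) ℂ}
    (hS : ∀ v ∈ S2 n M s, R *ᵥ v = r • v) (hW : ∀ v ∈ W2 n M r, R *ᵥ v = (-s) • v) :
    IsSuperRCheck M r s R where
  mulVec_bas2_self_of_lt i h := hS _ (Submodule.subset_span (Or.inl ⟨i, h, rfl⟩))
  mulVec_bas2_self_of_le i h := hW _ (Submodule.subset_span (Or.inl ⟨i, h, rfl⟩))
  mulVec_bas2_of_lt j k h := by
    have hu := hS _ (add_smul_bas2_mem_S2 h)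
    have hw := hW _ (sub_smul_bas2_mem_W2 h)
    apply smul_right_injective _ hrs
    have : (r + s) • bas2 j k = r • (bas2 j k + (superSign M j k * s) • bas2 k j)
        + s • (bas2 j k - (superSign M j k * r) • bas2 k j) := by module
    change (r + s) • R *ᵥ bas2 j k = _
    rw [← mulVec_smul, this, mulVec_add, mulVec_smul, mulVec_smul,
      hu, hw]
    module
  mulVec_bas2_of_gt j k h := by
    have hu := hS _ (add_smul_bas2_mem_S2 h)
    have hw := hW _ (sub_smul_bas2_mem_W2 h)
    apply smul_right_injective _ (mul_ne_zero superSign_ne_zero hrs)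
    have : (superSign M j k * (r + s)) • bas2 k j = (bas2 j k + (superSign M j k * s) • bas2 k j)
        - (bas2 j k - (superSign M j k * r) • bas2 k j) := by module
    change (superSign M j k * (r + s)) • R *ᵥ bas2 k j
      = (superSign M j k * (r + s)) • superSign M j k • bas2 j k
    rw [← mulVec_smul, this, mulVec_sub, hu, hw, smul_smul,
      mul_right_comm, superSign_mul_self, one_mul]
    module

end Eigenvectors

theorem stmt3_general (M N : ℕ) (r s : ℂ) (hrs : r + s ≠ 0)
    (P Q : Matrix (Fin (M + N) × Fin (M + N)) (Fin (M + N) × Fin (M + N)) ℂ)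
    (hP1 : ∀ v ∈ S2 (M + N) M s, P.mulVec v = v)
    (hP2 : ∀ v ∈ W2 (M + N) M r, P.mulVec v = 0)
    (hQ1 : ∀ v ∈ S2 (M + N) M s, Q.mulVec v = 0)
    (hQ2 : ∀ v ∈ W2 (M + N) M r, Q.mulVec v = v) :
    L12 (r • P - s • Q) * L23 (r • P - s • Q) * L12 (r • P - s • Q)
      = L23 (r • P - s • Q) * L12 (r • P - s • Q) * L23 (r • P - s • Q) := by
  refine (isSuperRCheck_of_eigen (M := M) hrs (fun v hv => ?_) fun v hv => ?_).braid
  · rw [sub_mulVec, smul_mulVec, smul_mulVec, hP1 v hv, hQ1 v hv,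
      smul_zero, sub_zero]
  · rw [sub_mulVec, smul_mulVec, smul_mulVec, hP2 v hv, hQ2 v hv,
      smul_zero, zero_sub, neg_smul]

/-- `R̂ = rP − sQ` satisfies the braid relation
`R̂₁₂R̂₂₃R̂₁₂ = R̂₂₃R̂₁₂R̂₂₃` on `V^{⊗3}`. -/
theorem stmt3 (M N : ℕ) (r s : ℂ) (hr : r ≠ 0) (hs : s ≠ 0) (hrs : r + s ≠ 0)
    (P Q : Matrix (Fin (M + N) × Fin (M + N)) (Fin (M + N) × Fin (M + N)) ℂ)
    (hP1 : ∀ v ∈ S2 (M + N) M s, P.mulVec v = v)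
    (hP2 : ∀ v ∈ W2 (M + N) M r, P.mulVec v = 0)
    (hQ1 : ∀ v ∈ S2 (M + N) M s, Q.mulVec v = 0)
    (hQ2 : ∀ v ∈ W2 (M + N) M r, Q.mulVec v = v) :
    L12 (r • P - s • Q) * L23 (r • P - s • Q) * L12 (r • P - s • Q)
      = L23 (r • P - s • Q) * L12 (r • P - s • Q) * L23 (r • P - s • Q) :=
  stmt3_general M N r s hrs P Q hP1 hP2 hQ1 hQ2

end
end

section
/- Let A be an associative C-algebra with elements e₁, e₂, e₃ and nonzero scalars r,s satisfying e₁²e₂ − (r+s)e₁e₂e₁ + rs e₂e₁² = 0, e₁e₂e₁e₂ = rs e₂e₁e₂e₁, e₁e₃ = e₃e₁, and e₂² = 0. Define P = e₁e₂e₃e₂ + rs e₃e₂e₁e₂ + e₂e₁e₂e₃ + rs e₂e₃e₂e₁ − (r+s) e₂e₁e₃e₂. Then P e₁ = (rs)^{-1} e₁ P. -/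
/-! Modulo `e₁e₃ = e₃e₁`, the defect `e₁P − rs·Pe₁` is an explicit two-sided combination of the
Serre element `S = e₁²e₂ − (r+s)e₁e₂e₁ + rs e₂e₁²` and of `Q = e₁e₂e₁e₂ − rs e₂e₁e₂e₁`, namely
`S e₃e₂ − rs e₂e₃ S + rs e₃ Q + Q e₃`, so it vanishes; dividing by `rs` gives the theorem. -/

theorem mul_eq_smul_mul_of_serre {R A : Type*} [CommRing R] [Ring A] [Algebra R A] (r s : R)
    (e₁ e₂ e₃ : A)
    (hS : e₁ ^ 2 * e₂ - (r + s) • (e₁ * e₂ * e₁) + (r * s) • (e₂ * e₁ ^ 2) = 0)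
    (hQ : e₁ * e₂ * e₁ * e₂ = (r * s) • (e₂ * e₁ * e₂ * e₁))
    (hc : Commute e₁ e₃) (P : A)
    (hP : P = e₁ * e₂ * e₃ * e₂ + (r * s) • (e₃ * e₂ * e₁ * e₂) + e₂ * e₁ * e₂ * e₃
        + (r * s) • (e₂ * e₃ * e₂ * e₁) - (r + s) • (e₂ * e₁ * e₃ * e₂)) :
    e₁ * P = (r * s) • (P * e₁) := by
  rw [← sub_eq_zero] at hQ
  have key : e₁ * P - (r * s) • (P * e₁) =
      (e₁ ^ 2 * e₂ - (r + s) • (e₁ * e₂ * e₁) + (r * s) • (e₂ * e₁ ^ 2)) * e₃ * e₂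
      - (r * s) • (e₂ * e₃ * (e₁ ^ 2 * e₂ - (r + s) • (e₁ * e₂ * e₁) + (r * s) • (e₂ * e₁ ^ 2)))
      + (r * s) • (e₃ * (e₁ * e₂ * e₁ * e₂ - (r * s) • (e₂ * e₁ * e₂ * e₁)))
      + (e₁ * e₂ * e₁ * e₂ - (r * s) • (e₂ * e₁ * e₂ * e₁)) * e₃ := by
    subst hP
    simp only [mul_add, add_mul, sub_mul, mul_sub, smul_mul_assoc, mul_smul_comm, mul_assoc,
      pow_two, hc.eq, hc.left_comm]
    module
  simpa [hS, hQ, sub_eq_zero] using key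

theorem stmt10_general {A : Type*} [Ring A] [Algebra ℂ A] (r s : ℂ) (hr : r ≠ 0) (hs : s ≠ 0)
    (e₁ e₂ e₃ : A)
    (h1 : e₁ ^ 2 * e₂ - (r + s) • (e₁ * e₂ * e₁) + (r * s) • (e₂ * e₁ ^ 2) = 0)
    (h2 : e₁ * e₂ * e₁ * e₂ = (r * s) • (e₂ * e₁ * e₂ * e₁))
    (h3 : e₁ * e₃ = e₃ * e₁)
    (P : A)
    (hP : P = e₁ * e₂ * e₃ * e₂ + (r * s) • (e₃ * e₂ * e₁ * e₂) + e₂ * e₁ * e₂ * e₃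
        + (r * s) • (e₂ * e₃ * e₂ * e₁) - (r + s) • (e₂ * e₁ * e₃ * e₂)) :
    P * e₁ = (r * s)⁻¹ • (e₁ * P) := by
  rw [eq_inv_smul_iff₀ (mul_ne_zero hr hs)]
  exact (mul_eq_smul_mul_of_serre r s e₁ e₂ e₃ h1 h2 h3 P hP).symm

/-- in an associative ℂ-algebra with elements `e₁,e₂,e₃` satisfying
`e₁²e₂ − (r+s)e₁e₂e₁ + rs e₂e₁² = 0`, `e₁e₂e₁e₂ = rs e₂e₁e₂e₁`, `e₁e₃ = e₃e₁` and
`e₂² = 0`, the element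
`P = e₁e₂e₃e₂ + rs e₃e₂e₁e₂ + e₂e₁e₂e₃ + rs e₂e₃e₂e₁ − (r+s) e₂e₁e₃e₂`
satisfies `P e₁ = (rs)^{-1} e₁ P`. -/
theorem stmt10 {A : Type*} [Ring A] [Algebra ℂ A] (r s : ℂ) (hr : r ≠ 0) (hs : s ≠ 0)
    (e₁ e₂ e₃ : A)
    (h1 : e₁ ^ 2 * e₂ - (r + s) • (e₁ * e₂ * e₁) + (r * s) • (e₂ * e₁ ^ 2) = 0)
    (h2 : e₁ * e₂ * e₁ * e₂ = (r * s) • (e₂ * e₁ * e₂ * e₁))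
    (h3 : e₁ * e₃ = e₃ * e₁)
    (h4 : e₂ ^ 2 = 0)
    (P : A)
    (hP : P = e₁ * e₂ * e₃ * e₂ + (r * s) • (e₃ * e₂ * e₁ * e₂) + e₂ * e₁ * e₂ * e₃
        + (r * s) • (e₂ * e₃ * e₂ * e₁) - (r + s) • (e₂ * e₁ * e₃ * e₂)) :
    P * e₁ = (r * s)⁻¹ • (e₁ * P) :=
  stmt10_general r s hr hs e₁ e₂ e₃ h1 h2 h3 P hP
end

section
/- Let r,s be nonzero complex numbers such that rs^{-1} is not a root of unity, and let V^∞ be the vector space with basis {y_n : y ∈ {1,2,3,4}, n ∈ Z}. Define operators k₁, k₂, k₃, l₁, l₂, l₃, e₁, e₂, e₃, f₁, f₂, f₃ on V^∞ by (for a fixed x ∈ C^×): k₁(y_n) shifts index n to n+1 with coefficient s,r,1,1 for y=1,2,3,4; k₃(y_n) shifts n to n−1 with coefficient 1,1,r,s; k₂(y_n) = y_n times 1,s,s,1; l_i = k_i with r,s interchanged; e₁(2_n) = (1−r^{-1}s) 1_{n+1} and e₁ kills 1_n,3_n,4_n; f₁(1_n) = (1−rs^{-1}) 2_n; e₃(4_n)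 = (1−rs^{-1}) 3_{n−1}; f₃(3_n) = (1−r^{-1}s) 4_n; e₂(3_n) = (r^{-1}s−1) 2_n and e₂(1_n) = (r^{-1}s−1) x (rs)^{-n} 4_n; f₂(2_n) = (rs^{-1}−1) 3_n, with all unspecified actions zero. Then the element P = e₁e₂e₃e₂ + rs e₃e₂e₁e₂ + e₂e₁e₂e₃ + rs e₂e₃e₂e₁ − (r+s) e₂e₁e₃e₂ acts on V^∞ by P(y_n) = x (rs)^{-n} (1−r^{-1}s)(1−rs^{-1})(r^{-1}s−1)² y_n. -/
noncomputable section

/-- `V^∞` with basis `y_n`, `y ∈ {1,2,3,4}` (coded as `Fin 4`), `n ∈ ℤ`. -/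
abbrev Vinf := Fin 4 × ℤ → ℂ

/-- the basis vector `y_n`. -/
def basV (y : Fin 4) (n : ℤ) : Vinf := fun p => if p = (y, n) then 1 else 0

/-- `e₁(2_n) = (1−r⁻¹s) 1_{n+1}`, other basis vectors killed. -/
def e1 (r s : ℂ) : Vinf → Vinf := fun v p =>
  if p.1 = 0 then (1 - r⁻¹ * s) * v (1, p.2 - 1) else 0

/-- `e₂(3_n) = (r⁻¹s−1) 2_n`, `e₂(1_n) = (r⁻¹s−1) x (rs)^{-n} 4_n`, others killed. -/
def e2 (r s x : ℂ) : Vinf → Vinf := fun v p =>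
  if p.1 = 1 then (r⁻¹ * s - 1) * v (2, p.2)
  else if p.1 = 3 then (r⁻¹ * s - 1) * x * (r * s) ^ (-p.2) * v (0, p.2) else 0

/-- `e₃(4_n) = (1−rs⁻¹) 3_{n−1}`, others killed. -/
def e3 (r s : ℂ) : Vinf → Vinf := fun v p =>
  if p.1 = 2 then (1 - r * s⁻¹) * v (3, p.2 + 1) else 0

/-- `P = e₁e₂e₃e₂ + rs e₃e₂e₁e₂ + e₂e₁e₂e₃ + rs e₂e₃e₂e₁ − (r+s) e₂e₁e₃e₂`. -/
def Pop (r s x : ℂ) : Vinf → Vinf := fun v =>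
  e1 r s (e2 r s x (e3 r s (e2 r s x v)))
  + (r * s) • e3 r s (e2 r s x (e1 r s (e2 r s x v)))
  + e2 r s x (e1 r s (e2 r s x (e3 r s v)))
  + (r * s) • e2 r s x (e3 r s (e2 r s x (e1 r s v)))
  - (r + s) • e2 r s x (e1 r s (e3 r s (e2 r s x v)))

/-! Each basis vector `y_n` is moved by exactly one of the five monomials of `P`, along the cycle
`1_n → 4_n → 3_{n-1} → 2_{n-1} → 1_n` of `e₁, e₂, e₃, e₂`; so `P(y_n)` is a multiple of `y_n`, and the
multiple is the product of the four coefficients met on the way (times `rs` for two of the monomials,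
which absorbs the shift `n ↦ n + 1` in `(rs)^{-n}`). Basis labels `1, 2, 3, 4` are `0, 1, 2, 3 : Fin 4`. -/

lemma mul_zpow_neg_add_one {G₀ : Type*} [GroupWithZero G₀] {a : G₀} (ha : a ≠ 0) (n : ℤ) :
    a * a ^ (-(n + 1)) = a ^ (-n) := by
  rw [← zpow_one_add₀ ha]; ring_nf

section Operators

variable (r s x : ℂ) (n : ℤ)

lemma e1_smul (c : ℂ) (v : Vinf) : e1 r s (c • v) = c • e1 r s v := by
  funext p; simp only [e1, Pi.smul_apply, smul_eq_mul]; split_ifs <;> ring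

lemma e2_smul (c : ℂ) (v : Vinf) : e2 r s x (c • v) = c • e2 r s x v := by
  funext p; simp only [e2, Pi.smul_apply, smul_eq_mul]; split_ifs <;> ring

lemma e3_smul (c : ℂ) (v : Vinf) : e3 r s (c • v) = c • e3 r s v := by
  funext p; simp only [e3, Pi.smul_apply, smul_eq_mul]; split_ifs <;> ring

lemma e1_zero : e1 r s 0 = 0 := by simpa using e1_smul r s 0 0

lemma e2_zero : e2 r s x 0 = 0 := by simpa using e2_smul r s x 0 0

lemma e3_zero : e3 r s 0 = 0 := by simpa using e3_smul r s 0 0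

lemma e1_basV_one : e1 r s (basV 1 n) = (1 - r⁻¹ * s) • basV 0 (n + 1) := by
  funext ⟨a, m⟩
  simp only [e1, basV, Prod.ext_iff, Pi.smul_apply, smul_eq_mul]
  split_ifs <;> simp_all; omega

lemma e1_basV_of_ne {y : Fin 4} (hy : y ≠ 1) : e1 r s (basV y n) = 0 := by
  funext p; simp [e1, basV, Prod.ext_iff, hy.symm]

lemma e2_basV_zero :
    e2 r s x (basV 0 n) = ((r⁻¹ * s - 1) * x * (r * s) ^ (-n)) • basV 3 n := by
  funext ⟨a, m⟩
  simp only [e2, basV, Prod.ext_iff, Pi.smul_apply, smul_eq_mul]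
  split_ifs <;> simp_all

lemma e2_basV_two : e2 r s x (basV 2 n) = (r⁻¹ * s - 1) • basV 1 n := by
  funext ⟨a, m⟩
  simp only [e2, basV, Prod.ext_iff, Pi.smul_apply, smul_eq_mul]
  split_ifs <;> simp_all

lemma e2_basV_of_ne {y : Fin 4} (hy₀ : y ≠ 0) (hy₂ : y ≠ 2) : e2 r s x (basV y n) = 0 := by
  funext p; simp [e2, basV, Prod.ext_iff, hy₀.symm, hy₂.symm]

lemma e3_basV_three : e3 r s (basV 3 n) = (1 - r * s⁻¹) • basV 2 (n - 1) := by
  funext ⟨a, m⟩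
  simp only [e3, basV, Prod.ext_iff, Pi.smul_apply, smul_eq_mul]
  split_ifs <;> simp_all; omega

lemma e3_basV_of_ne {y : Fin 4} (hy : y ≠ 3) : e3 r s (basV y n) = 0 := by
  funext p; simp [e3, basV, Prod.ext_iff, hy.symm]

def pEigenvalue : ℂ :=
  x * (r * s) ^ (-n) * (1 - r⁻¹ * s) * (1 - r * s⁻¹) * (r⁻¹ * s - 1) ^ 2

lemma Pop_basV_zero : Pop r s x (basV 0 n) = pEigenvalue r s x n • basV 0 n := by
  simp only [Pop, e2_basV_zero, e3_smul, e3_basV_three, smul_smul, e2_smul, ne_eq,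
    Fin.reduceEq, not_false_eq_true, e2_basV_two, e1_smul, e1_basV_one, sub_add_cancel,
    e1_basV_of_ne, smul_zero, e2_zero, e3_zero, add_zero, e3_basV_of_ne, e1_zero, sub_zero]
  congr 1
  rw [pEigenvalue]; ring

lemma Pop_basV_one (hr : r ≠ 0) (hs : s ≠ 0) :
    Pop r s x (basV 1 n) = pEigenvalue r s x n • basV 1 n := by
  simp only [Pop, ne_eq, one_ne_zero, not_false_eq_true, Fin.reduceEq, e2_basV_of_ne, e3_zero,
    e2_zero, e1_zero, smul_zero, add_zero, e3_basV_of_ne, e1_basV_one, e2_smul, e2_basV_zero,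
    smul_smul, e3_smul, e3_basV_three, add_sub_cancel_right, e2_basV_two, zero_add, sub_zero]
  congr 1
  rw [pEigenvalue, ← mul_zpow_neg_add_one (mul_ne_zero hr hs) n]; ring

lemma Pop_basV_two (hr : r ≠ 0) (hs : s ≠ 0) :
    Pop r s x (basV 2 n) = pEigenvalue r s x n • basV 2 n := by
  simp only [Pop, ne_eq, Fin.reduceEq, not_false_eq_true, e2_basV_two, e3_smul, e3_basV_of_ne,
    smul_zero, e2_zero, e1_zero, e1_smul, e1_basV_one, smul_smul, e2_smul, e2_basV_zero,
    e3_basV_three, add_sub_cancel_right, zero_add, add_zero, e1_basV_of_ne, e3_zero, sub_zero]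
  congr 1
  rw [pEigenvalue, ← mul_zpow_neg_add_one (mul_ne_zero hr hs) n]; ring

lemma Pop_basV_three : Pop r s x (basV 3 n) = pEigenvalue r s x n • basV 3 n := by
  simp only [Pop, ne_eq, Fin.reduceEq, not_false_eq_true, e2_basV_of_ne, e3_zero, e2_zero,
    e1_zero, smul_zero, add_zero, e3_basV_three, e2_smul, e2_basV_two, smul_smul, e1_smul,
    e1_basV_one, sub_add_cancel, e2_basV_zero, zero_add, e1_basV_of_ne, sub_zero]
  congr 1
  rw [pEigenvalue]; ring

end Operators

theorem stmt11_general (r s x : ℂ) (hr : r ≠ 0) (hs : s ≠ 0) :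
    ∀ (y : Fin 4) (n : ℤ),
      Pop r s x (basV y n)
        = (x * (r * s) ^ (-n) * (1 - r⁻¹ * s) * (1 - r * s⁻¹) * (r⁻¹ * s - 1) ^ 2) •
            basV y n := by
  intro y n
  fin_cases y
  exacts [Pop_basV_zero r s x n, Pop_basV_one r s x n hr hs, Pop_basV_two r s x n hr hs,
    Pop_basV_three r s x n]

/-- `P` acts on `V^∞` by
`P(y_n) = x (rs)^{-n} (1−r⁻¹s)(1−rs⁻¹)(r⁻¹s−1)² y_n`. -/
theorem stmt11 (r s x : ℂ) (hr : r ≠ 0) (hs : s ≠ 0) (hx : x ≠ 0)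
    (hroot : ∀ k : ℕ, 0 < k → (r * s⁻¹) ^ k ≠ 1) :
    ∀ (y : Fin 4) (n : ℤ),
      Pop r s x (basV y n)
        = (x * (r * s) ^ (-n) * (1 - r⁻¹ * s) * (1 - r * s⁻¹) * (r⁻¹ * s - 1) ^ 2) •
            basV y n :=
  stmt11_general r s x hr hs
end
end

section
/- Let V = C^{M+N} with |i| = 0 for i ≤ M, |i| = 1 for i > M, and let c: V⊗V → V⊗V be the graded permutation v_i⊗v_j ↦ (−1)^{|i||j|} v_j⊗v_i. Then c is an involution (c² = id), and for the Perk–Schultz matrix R = R^{M|N}_{r,s}, the matrix R' := c R^{-1} c satisfies: R' is again of Perk–Schultz form, with diagonal entries on E_{ii}⊗E_{ii} equal to r^{-1} for i ≤ M and s^{-1} for i > M. -/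
/-!
A matrix of Perk–Schultz form preserves each line `ℂ v_i⊗v_i` and each plane spanned by
`v_i⊗v_j, v_j⊗v_i`, so such matrices are closed under products, and when the `2 × 2` blocks
are triangular, as they are for `R`, the inverse is read off blockwise: the coefficients
`a_ij` of `E_ii⊗E_jj` invert and those of `E_ji⊗E_ij` become `-b_ij / (a_ij a_ji)`.
Conjugation by `c` exchanges the two basis vectors of each plane with the same sign on both,
so it only transposes the coefficient arrays; the coefficient of `E_ii⊗E_ii` in `c R⁻¹ c` is
therefore that of `R⁻¹`, namely `r⁻¹` or `s⁻¹`.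
-/

open Matrix
open scoped Kronecker

noncomputable section

/-- matrix unit `E_{ij}`. -/
def E {n : ℕ} (i j : Fin n) : Matrix (Fin n) (Fin n) ℂ := Matrix.single i j 1

/-- the Perk–Schultz matrix `R^{M|N}_{r,s}`. -/
def PS (n M : ℕ) (r s : ℂ) : Matrix (Fin n × Fin n) (Fin n × Fin n) ℂ :=
  (∑ i : Fin n, (if (i : ℕ) < M then r else s) • (E i i ⊗ₖ E i i))
  + (∑ i : Fin n, ∑ j : Fin n, (if j < i then (1 : ℂ) else 0) • (E i i ⊗ₖ E j j))
  + (∑ i : Fin n, ∑ j : Fin n, (if i < j then r * s else 0) • (E i i ⊗ₖ E j j))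
  + (∑ i : Fin n, ∑ j : Fin n,
      (if i < j then (r - s) * (-1 : ℂ) ^ (par M i) else 0) • (E j i ⊗ₖ E i j))

/-- the graded permutation `c : v_i⊗v_j ↦ (−1)^{|i||j|} v_j⊗v_i`, as a matrix. -/
def cM (n M : ℕ) : Matrix (Fin n × Fin n) (Fin n × Fin n) ℂ :=
  fun p q => if p.1 = q.2 ∧ p.2 = q.1 then (-1 : ℂ) ^ (par M q.1 * par M q.2) else 0

lemma E_kronecker_E {n : ℕ} (i j k l : Fin n) : E i j ⊗ₖ E k l = Matrix.single (i, k) (j, l) 1 := by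
  rw [E, E, single_kronecker_single, one_mul]

lemma sum_smul_E_kronecker_E_apply {n : ℕ} (f : Fin n → Fin n → ℂ) (p q : Fin n × Fin n) :
    (∑ i, ∑ j, f i j • (E i i ⊗ₖ E j j)) p q = if q = p then f p.1 p.2 else 0 := by
  rw [← Fintype.sum_prod_type', Matrix.sum_apply, Finset.sum_eq_single p]
  · simp [E_kronecker_E, Matrix.single_apply, eq_comm]
  · intro x _ hx
    simp [E_kronecker_E, hx]
  · simp

lemma sum_smul_E_kronecker_E_swap_apply {n : ℕ} (f : Fin n → Fin n → ℂ) (p q : Fin n × Fin n) :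
    (∑ i, ∑ j, f i j • (E j i ⊗ₖ E i j)) p q = if q = p.swap then f p.2 p.1 else 0 := by
  rw [← Fintype.sum_prod_type', Matrix.sum_apply, Finset.sum_eq_single p.swap]
  · simp [E_kronecker_E, Matrix.single_apply, eq_comm]; rfl
  · intro x _ hx
    have : (x.2, x.1) ≠ p := fun h => hx (by rw [← h]; rfl)
    simp [E_kronecker_E, this]
  · simp

lemma sum_smul_E_kronecker_E_self_apply {n : ℕ} (f : Fin n → ℂ) (p q : Fin n × Fin n) :
    (∑ i, f i • (E i i ⊗ₖ E i i)) p q = if q = p ∧ p.1 = p.2 then f p.1 else 0 := by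
  rw [Matrix.sum_apply, Finset.sum_eq_single p.1]
  · simp [E_kronecker_E, Matrix.single_apply]
    grind
  · intro i _ hi
    simp [E_kronecker_E, Matrix.single_apply]
    grind
  · simp

def psForm {n : ℕ} (a b : Fin n → Fin n → ℂ) : Matrix (Fin n × Fin n) (Fin n × Fin n) ℂ :=
  (∑ i, ∑ j, a i j • (E i i ⊗ₖ E j j)) + ∑ i, ∑ j, (if i ≠ j then b i j else 0) • (E j i ⊗ₖ E i j)

section psForm

variable {n : ℕ} (a b a' b' : Fin n → Fin n → ℂ)

lemma psForm_apply (p q : Fin n × Fin n) :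
    psForm a b p q = (if q = p then a p.1 p.2 else 0)
      + if p.1 ≠ p.2 ∧ q = p.swap then b p.2 p.1 else 0 := by
  rw [psForm, Matrix.add_apply, sum_smul_E_kronecker_E_apply, sum_smul_E_kronecker_E_swap_apply]
  grind

lemma psForm_mul :
    psForm a b * psForm a' b' =
      psForm (fun i j => a i j * a' i j + if i ≠ j then b j i * b' i j else 0)
        (fun i j => a j i * b' i j + b i j * a' i j) := by
  ext p q
  rw [Matrix.mul_apply]
  simp only [psForm_apply, add_mul, ite_mul, zero_mul, Finset.sum_add_distrib]
  by_cases hp : p.1 = p.2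
  · simp [hp]
  · have hswap : p.swap ≠ p := fun h => hp (congrArg Prod.snd h)
    simp only [ne_eq, hp, not_false_eq_true, true_and, Finset.sum_ite_eq', Finset.mem_univ,
      if_true, Prod.fst_swap, Prod.snd_swap, Prod.swap_swap, Ne.symm hp]
    split_ifs <;> simp_all

lemma psForm_one : psForm (fun _ _ => 1) (fun _ _ => 0) = (1 : Matrix (Fin n × Fin n) _ ℂ) := by
  ext p q
  rw [psForm_apply, Matrix.one_apply]
  grind

lemma psForm_inv (ha : ∀ i j, a i j ≠ 0) (hb : ∀ i j, i ≠ j → b i j * b j i = 0) :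
    (psForm a b)⁻¹ = psForm (fun i j => (a i j)⁻¹) (fun i j => -b i j / (a i j * a j i)) := by
  refine Matrix.inv_eq_right_inv ?_
  rw [psForm_mul, ← psForm_one]
  congr 1 <;> funext i j
  · split_ifs with hij
    · field_simp [ha]
      rw [hb j i hij.symm]
      ring
    · simp [ha]
  · field_simp [ha]
    ring

end psForm

lemma neg_one_pow_mul_self (k : ℕ) : (-1 : ℂ) ^ k * (-1) ^ k = 1 := by
  simp [← mul_pow]

lemma cM_apply (n M : ℕ) (p q : Fin n × Fin n) :
    cM n M p q = if q = p.swap then (-1) ^ (par M q.1 * par M q.2) else 0 := by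
  simp only [cM, Prod.ext_iff, Prod.fst_swap, Prod.snd_swap, eq_comm, and_comm]

lemma cM_mul_apply (n M : ℕ) (A : Matrix (Fin n × Fin n) (Fin n × Fin n) ℂ)
    (p q : Fin n × Fin n) : (cM n M * A) p q = (-1) ^ (par M p.1 * par M p.2) * A p.swap q := by
  rw [Matrix.mul_apply, Fintype.sum_eq_single p.swap fun x hx => by simp [cM_apply, hx]]
  simp [cM_apply, Nat.mul_comm]

lemma mul_cM_apply (n M : ℕ) (A : Matrix (Fin n × Fin n) (Fin n × Fin n) ℂ)
    (p q : Fin n × Fin n) : (A * cM n M) p q = A p q.swap * (-1) ^ (par M q.1 * par M q.2) := by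
  rw [Matrix.mul_apply, Fintype.sum_eq_single q.swap fun x hx => by
    rw [cM_apply, if_neg fun h => hx (by rw [h, Prod.swap_swap]), mul_zero]]
  simp [cM_apply]

lemma cM_mul_cM (n M : ℕ) : cM n M * cM n M = 1 := by
  ext p q
  rw [cM_mul_apply, cM_apply, Matrix.one_apply]
  by_cases hqp : q = p
  · simp [hqp, neg_one_pow_mul_self]
  · simp [hqp, Ne.symm hqp]


lemma psForm_conj {n : ℕ} (M : ℕ) (a b : Fin n → Fin n → ℂ) :
    cM n M * psForm a b * cM n M = psForm (fun i j => a j i) (fun i j => b j i) := by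
  ext p q
  rw [mul_cM_apply, cM_mul_apply, psForm_apply, psForm_apply]
  by_cases hqp : q = p
  · subst hqp
    rw [mul_right_comm, neg_one_pow_mul_self, one_mul]
    grind
  · by_cases hqs : q = p.swap
    · subst hqs
      rw [mul_right_comm, Prod.fst_swap, Prod.snd_swap, Nat.mul_comm, neg_one_pow_mul_self, one_mul]
      grind
    · simp [hqp, hqs, Prod.swap_eq_iff_eq_swap]

def psDiagCoeff {n : ℕ} (M : ℕ) (r s : ℂ) (i j : Fin n) : ℂ :=
  if i = j then (if (i : ℕ) < M then r else s) else if j < i then 1 else r * s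

def psSwapCoeff {n : ℕ} (M : ℕ) (r s : ℂ) (i j : Fin n) : ℂ :=
  if i < j then (r - s) * (-1) ^ par M i else 0

lemma PS_eq_psForm (n M : ℕ) (r s : ℂ) :
    PS n M r s = psForm (psDiagCoeff M r s) (psSwapCoeff M r s) := by
  ext p q
  simp only [PS, psForm_apply, Matrix.add_apply, sum_smul_E_kronecker_E_self_apply,
    sum_smul_E_kronecker_E_apply, sum_smul_E_kronecker_E_swap_apply, psDiagCoeff, psSwapCoeff]
  grind

lemma psDiagCoeff_ne_zero {n M : ℕ} {r s : ℂ} (hr : r ≠ 0) (hs : s ≠ 0) (i j : Fin n) :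
    psDiagCoeff M r s i j ≠ 0 := by
  unfold psDiagCoeff
  split_ifs <;> simp [hr, hs]

lemma psSwapCoeff_mul_psSwapCoeff {n : ℕ} (M : ℕ) (r s : ℂ) (i j : Fin n) :
    psSwapCoeff M r s i j * psSwapCoeff M r s j i = 0 := by
  unfold psSwapCoeff
  split_ifs with h h'
  · exact absurd h' (lt_asymm h)
  all_goals simp

theorem stmt17_general (M N : ℕ) (r s : ℂ) (hr : r ≠ 0) (hs : s ≠ 0) :
    cM (M + N) M * cM (M + N) M = 1 ∧
    ∃ a b : Fin (M + N) → Fin (M + N) → ℂ,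
      (cM (M + N) M * (PS (M + N) M r s)⁻¹ * cM (M + N) M
        = (∑ i : Fin (M + N), ∑ j : Fin (M + N), a i j • (E i i ⊗ₖ E j j))
          + (∑ i : Fin (M + N), ∑ j : Fin (M + N),
              (if i ≠ j then b i j else 0) • (E j i ⊗ₖ E i j))) ∧
      ∀ i : Fin (M + N), a i i = if (i : ℕ) < M then r⁻¹ else s⁻¹ := by
  rw [PS_eq_psForm, psForm_inv _ _ (psDiagCoeff_ne_zero hr hs)
    fun i j _ => psSwapCoeff_mul_psSwapCoeff M r s i j, psForm_conj]
  refine ⟨cM_mul_cM _ _, _, _, rfl, fun i => ?_⟩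
  simp only [psDiagCoeff]
  split_ifs <;> rfl

/-- `c` is an involution, and `R' = c R⁻¹ c` is again of Perk–Schultz form
(a linear combination of `E_{ii}⊗E_{jj}` and `E_{ji}⊗E_{ij}` for `i ≠ j`), with the
coefficient of `E_{ii}⊗E_{ii}` equal to `r⁻¹` for `i ≤ M` and `s⁻¹` for `i > M`. -/
theorem stmt17 (M N : ℕ) (r s : ℂ) (hr : r ≠ 0) (hs : s ≠ 0) (hrs : r + s ≠ 0) :
    cM (M + N) M * cM (M + N) M = 1 ∧
    ∃ a b : Fin (M + N) → Fin (M + N) → ℂ,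
      (cM (M + N) M * (PS (M + N) M r s)⁻¹ * cM (M + N) M
        = (∑ i : Fin (M + N), ∑ j : Fin (M + N), a i j • (E i i ⊗ₖ E j j))
          + (∑ i : Fin (M + N), ∑ j : Fin (M + N),
              (if i ≠ j then b i j else 0) • (E j i ⊗ₖ E i j))) ∧
      ∀ i : Fin (M + N), a i i = if (i : ℕ) < M then r⁻¹ else s⁻¹ :=
  stmt17_general M N r s hr hs

end
end
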